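/- Under the hypotheses Ric ≥ (n−1)g (n ≥ 3, M compact) and validity of the Sobolev inequality with constants A, B, if max{A/A₀, B/B₀} ≤ (1−δ_n)^(−2/n), where δ_n is Perelman's constant, then Vol_g(M) ≥ (1−δ_n)·Vol(𝕊ⁿ). -/

import Mathlib

open MeasureTheory Real

/-- Vol_{𝕊ⁿ}(B(y₀,ρ)) in the unit-sphere model. -/
noncomputable def sphereBallVol (n : ℕ) (ρ : ℝ) : ℝ :=
  ((n : ℝ) * (volume (Metric.ball (0 : EuclideanSpace ℝ (Fin n)) 1)).toReal) *
    ∫ t in (0:ℝ)..ρ, Real.sin t ^ (n - 1)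

lemma sphereBallVol_pi_pos {n : ℕ} (hn : 3 ≤ n) : 0 < sphereBallVol n Real.pi := by
  have hn0 : (0:ℝ) < n := by positivity
  have hball : 0 < (volume (Metric.ball (0 : EuclideanSpace ℝ (Fin n)) 1)).toReal := by
    refine ENNReal.toReal_pos (ne_of_gt (Metric.measure_ball_pos _ _ one_pos)) ?_
    exact (measure_ball_lt_top).ne
  have hint : 0 < ∫ t in (0:ℝ)..Real.pi, Real.sin t ^ (n - 1) := by
    apply intervalIntegral.intervalIntegral_pos_of_pos_on
    · exact (Continuous.intervalIntegrable (by continuity) _ _)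
    · intro x hx
      exact pow_pos (Real.sin_pos_of_pos_of_lt_pi hx.1 hx.2) _
    · exact Real.pi_pos
  unfold sphereBallVol
  positivity

/-- Under Ric ≥ (n−1)g (encoded via `hdiam` and `hBG`) and validity of the Sobolev
inequality with constants A, B, if max{A/A₀, B/B₀} ≤ (1−δ_n)^(−2/n) (δ_n ∈ [0,1) being
Perelman's constant), then Vol(M) ≥ (1−δ_n)·Vol(𝕊ⁿ).
Here A₀ = 4/(n(n−2))·ω_n^(−2/n), B₀ = ω_n^(−2/n), ω_n = sphereBallVol n π. -/
theorem stmt_14 (n : ℕ) (hn : 3 ≤ n)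
    {M : Type*} [MetricSpace M] [CompactSpace M] [Nonempty M]
    [MeasurableSpace M] [BorelSpace M]
    (μ : Measure M) [IsFiniteMeasure μ] (hμ : μ Set.univ ≠ 0)
    (hdiam : ∀ x y : M, dist x y ≤ Real.pi)
    (hBG : ∀ (x : M) (r R : ℝ), 0 < r → r ≤ R → R ≤ Real.pi →
      (μ (Metric.ball x R)).toReal * sphereBallVol n r ≤
        (μ (Metric.ball x r)).toReal * sphereBallVol n R)
    (gradSq : (M → ℝ) → M → ℝ)
    (hgradc : ∀ c : ℝ, gradSq (fun _ => c) = fun _ => 0)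
    (hgradd : ∀ (x₀ : M) (φ : ℝ → ℝ), Differentiable ℝ φ →
      ∀ x, gradSq (fun y => φ (dist x₀ y)) x ≤ (deriv φ (dist x₀ x)) ^ 2)
    (A B : ℝ) (hA : 0 < A) (hB : 0 < B)
    (hSob : ∀ u : M → ℝ,
      (∫ x, |u x| ^ ((2 * (n : ℝ)) / ((n : ℝ) - 2)) ∂μ) ^ (((n : ℝ) - 2) / n) ≤
        A * ∫ x, gradSq u x ∂μ + B * ∫ x, u x ^ 2 ∂μ)
    (δ : ℝ) (hδ : δ ∈ Set.Ico (0 : ℝ) 1)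
    (hAB : max (A / (4 / ((n : ℝ) * ((n : ℝ) - 2)) * sphereBallVol n Real.pi ^ (-(2 : ℝ) / n)))
               (B / sphereBallVol n Real.pi ^ (-(2 : ℝ) / n)) ≤ (1 - δ) ^ (-(2 : ℝ) / n)) :
    (1 - δ) * sphereBallVol n Real.pi ≤ (μ Set.univ).toReal := by
  set ω := sphereBallVol n Real.pi with hωdef
  have hω : 0 < ω := sphereBallVol_pi_pos hn
  set V := (μ Set.univ).toReal with hVdef
  have hV : 0 < V := ENNReal.toReal_pos hμ (measure_ne_top μ _)
  have hn0 : ((n:ℝ)) ≠ 0 := by positivity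
  have h1δ : 0 < 1 - δ := by linarith [hδ.2]
  -- Sobolev applied to u ≡ 1
  have hs := hSob (fun _ => 1)
  simp only [abs_one, Real.one_rpow, one_pow, hgradc 1, integral_const, integral_zero,
    smul_eq_mul, mul_one, mul_zero, zero_add] at hs
  -- hs : V ^ ((n-2)/n) ≤ B * V
  have hωe : 0 < ω ^ (-(2:ℝ)/n) := Real.rpow_pos_of_pos hω _
  have hB' : B ≤ (1 - δ) ^ (-(2:ℝ)/n) * ω ^ (-(2:ℝ)/n) := by
    have := le_trans (le_max_right _ _) hAB
    rw [div_le_iff₀ hωe] at this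
    linarith
  have key : V ^ (-(2:ℝ)/n) ≤ ((1 - δ) * ω) ^ (-(2:ℝ)/n) := by
    have hsplit : ((n:ℝ) - 2)/n = -(2:ℝ)/n + 1 := by field_simp; ring
    change V ^ (((n:ℝ) - 2)/n) ≤ B * V at hs
    rw [hsplit, Real.rpow_add hV, Real.rpow_one] at hs
    have : V ^ (-(2:ℝ)/n) * V ≤ ((1 - δ) ^ (-(2:ℝ)/n) * ω ^ (-(2:ℝ)/n)) * V := by
      calc V ^ (-(2:ℝ)/n) * V ≤ B * V := hs
        _ ≤ _ := by
          apply mul_le_mul_of_nonneg_right hB' hV.le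
    have h2 := (mul_le_mul_iff_of_pos_right hV).mp this
    rwa [Real.mul_rpow h1δ.le hω.le]
  -- raise both sides to the power -n/2
  have hmono := Real.rpow_le_rpow_of_nonpos (Real.rpow_pos_of_pos hV _) key
    (z := -(n:ℝ)/2) (by have : (0:ℝ) ≤ n := Nat.cast_nonneg n; linarith)
  have hexp : (-(2:ℝ)/n) * (-(n:ℝ)/2) = 1 := by field_simp
  rw [← Real.rpow_mul (by positivity : (0:ℝ) ≤ (1-δ)*ω), ← Real.rpow_mul hV.le,
    hexp, Real.rpow_one, Real.rpow_one] at hmono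
  exact hmono
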